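/- arXiv:1903.08741 — 2 statements merged into one kernel-verified Lean document; each statement's English description precedes it below -/
import Mathlib

section
/- For n ∈ (1,2) and m = 1 - 1/n, the Mualem relative conductivity K_rw(p) = S_w(p)^{1/2}(1 - (1 - S_w(p)^{1/m})^m)^2, with S_w(p) = (1 + (α|p|)^n)^{-m}, is continuous on (-∞,0] (defining K_rw(0) = 1 by the limit S_w → 1), but its derivative with respect to p tends to infinity as p → 0⁻, i.e., K_rw is not Lipschitz continuous near p = 0. -/
open Real Set Filter

private lemma rpow_tendsto_pos {c : ℝ} (hc : 0 < c) :
    Tendsto (fun x : ℝ => x ^ c) (nhdsWithin 0 (Ioi 0)) (nhdsWithin 0 (Ioi 0)) := by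
  rw [tendsto_nhdsWithin_iff]
  constructor
  · have h := (Real.continuousAt_rpow_const 0 c (Or.inr hc.le)).tendsto
    rw [Real.zero_rpow hc.ne'] at h
    exact h.mono_left nhdsWithin_le_nhds
  · filter_upwards [eventually_mem_nhdsWithin] with x hx
    exact Real.rpow_pos_of_pos hx c

private lemma rpow_tendsto_neg {c : ℝ} (hc : c < 0) :
    Tendsto (fun x : ℝ => x ^ c) (nhdsWithin 0 (Ioi 0)) atTop := by
  have h := tendsto_inv_nhdsGT_zero.comp (rpow_tendsto_pos (c := -c) (by linarith))
  apply h.congr'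
  filter_upwards [eventually_mem_nhdsWithin] with x hx
  simp only [Function.comp]
  rw [← Real.rpow_neg (le_of_lt hx), neg_neg]

private lemma tendsto_xfun {α : ℝ} (hα : 0 < α) :
    Tendsto (fun p : ℝ => α * -p) (nhdsWithin 0 (Iio 0)) (nhdsWithin 0 (Ioi 0)) := by
  rw [tendsto_nhdsWithin_iff]
  constructor
  · have : Tendsto (fun p : ℝ => α * -p) (nhds 0) (nhds (α * -0)) := by
      exact (continuous_const.mul continuous_neg).tendsto 0
    simpa using this.mono_left nhdsWithin_le_nhds
  · filter_upwards [eventually_mem_nhdsWithin] with p hp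
    exact mul_pos hα (neg_pos.2 hp)

private noncomputable def Fm (α n m : ℝ) (q : ℝ) : ℝ :=
  (1 + (α * -q) ^ n) ^ (-(m/2)) *
    (1 - ((α * -q) ^ n / (1 + (α * -q) ^ n)) ^ m) ^ (2:ℕ)

private noncomputable def Dm (α n m : ℝ) (p : ℝ) : ℝ :=
  (α * n * (m/2)) * ((α * -p) ^ (n-1) * (1 + (α * -p) ^ n) ^ (-(m/2)-1) *
    (1 - ((α * -p) ^ n / (1 + (α * -p) ^ n)) ^ m) ^ (2:ℕ))
  + (2*m*n*α) * ((1 + (α * -p) ^ n) ^ (-(m/2)) *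
      (1 - ((α * -p) ^ n / (1 + (α * -p) ^ n)) ^ m)
      * (1 + (α * -p) ^ n) ^ (1-m) / (1 + (α * -p) ^ n) ^ (2:ℕ)) * (α * -p) ^ (n-2)

section limits
variable {α n m : ℝ} (hα : 0 < α) (hn1 : 1 < n) (hn2 : n < 2) (hm : m = 1 - 1/n)

private lemma hm0 (hn1 : 1 < n) (hm : m = 1 - 1/n) : 0 < m := by
  have hn0 : (0:ℝ) < n := lt_trans one_pos hn1
  have : 1/n < 1 := by rw [div_lt_one hn0]; exact hn1
  rw [hm]; linarith

private lemma tendsto_u (hα : 0 < α) (hn1 : 1 < n) :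
    Tendsto (fun p : ℝ => (α * -p) ^ n) (nhdsWithin 0 (Iio 0)) (nhdsWithin 0 (Ioi 0)) :=
  (rpow_tendsto_pos (lt_trans one_pos hn1)).comp (tendsto_xfun hα)

private lemma tendsto_v (hα : 0 < α) (hn1 : 1 < n) :
    Tendsto (fun p : ℝ => 1 + (α * -p) ^ n) (nhdsWithin 0 (Iio 0)) (nhds 1) := by
  have h2 := (tendsto_const_nhds :
      Tendsto (fun _ : ℝ => (1:ℝ)) (nhdsWithin 0 (Iio 0)) (nhds 1)).add
    ((tendsto_u hα hn1).mono_right nhdsWithin_le_nhds)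
  simpa only [add_zero] using h2

private lemma tendsto_vpow (hα : 0 < α) (hn1 : 1 < n) (c : ℝ) :
    Tendsto (fun p : ℝ => (1 + (α * -p) ^ n) ^ c) (nhdsWithin 0 (Iio 0)) (nhds 1) := by
  have h := (Real.continuousAt_rpow_const 1 c (Or.inl one_ne_zero)).tendsto.comp
    (tendsto_v hα hn1)
  simpa only [Function.comp_def, Real.one_rpow] using h

private lemma tendsto_w (hα : 0 < α) (hn1 : 1 < n) :
    Tendsto (fun p : ℝ => (α * -p) ^ n / (1 + (α * -p) ^ n))
      (nhdsWithin 0 (Iio 0)) (nhdsWithin 0 (Ioi 0)) := by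
  rw [tendsto_nhdsWithin_iff]
  constructor
  · have h := ((tendsto_u hα hn1).mono_right nhdsWithin_le_nhds).div
      (tendsto_v hα hn1) one_ne_zero
    simpa only [zero_div, Pi.div_def] using h
  · filter_upwards [eventually_mem_nhdsWithin] with p hp
    have hx : 0 < α * -p := mul_pos hα (neg_pos.2 hp)
    have hu : 0 < (α * -p) ^ n := Real.rpow_pos_of_pos hx n
    exact div_pos hu (by linarith)

private lemma tendsto_g (hα : 0 < α) (hn1 : 1 < n) (hm : m = 1 - 1/n) :
    Tendsto (fun p : ℝ => 1 - ((α * -p) ^ n / (1 + (α * -p) ^ n)) ^ m)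
      (nhdsWithin 0 (Iio 0)) (nhds 1) := by
  have hwm : Tendsto (fun p : ℝ => ((α * -p) ^ n / (1 + (α * -p) ^ n)) ^ m)
      (nhdsWithin 0 (Iio 0)) (nhds 0) :=
    ((rpow_tendsto_pos (hm0 hn1 hm)).comp (tendsto_w hα hn1)).mono_right nhdsWithin_le_nhds
  have h2 := (tendsto_const_nhds :
      Tendsto (fun _ : ℝ => (1:ℝ)) (nhdsWithin 0 (Iio 0)) (nhds 1)).sub hwm
  simpa only [sub_zero] using h2

private lemma tendsto_Fm (hα : 0 < α) (hn1 : 1 < n) (hm : m = 1 - 1/n) :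
    Tendsto (Fm α n m) (nhdsWithin 0 (Iio 0)) (nhds 1) := by
  have h := (tendsto_vpow hα hn1 (-(m/2))).mul ((tendsto_g hα hn1 hm).pow 2)
  unfold Fm
  simpa only [Fm, one_mul, one_pow] using h

private lemma tendsto_Dm (hα : 0 < α) (hn1 : 1 < n) (hn2 : n < 2) (hm : m = 1 - 1/n) :
    Tendsto (Dm α n m) (nhdsWithin 0 (Iio 0)) atTop := by
  have hn0 : (0:ℝ) < n := lt_trans one_pos hn1
  have hm' := hm0 hn1 hm
  have hxn1 : Tendsto (fun p : ℝ => (α * -p) ^ (n-1)) (nhdsWithin 0 (Iio 0)) (nhds 0) :=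
    ((rpow_tendsto_pos (by linarith)).comp (tendsto_xfun hα)).mono_right nhdsWithin_le_nhds
  have hxn2 : Tendsto (fun p : ℝ => (α * -p) ^ (n-2)) (nhdsWithin 0 (Iio 0)) atTop :=
    (rpow_tendsto_neg (by linarith)).comp (tendsto_xfun hα)
  have hT1 : Tendsto (fun p : ℝ => (α * n * (m/2)) * ((α * -p) ^ (n-1) *
      (1 + (α * -p) ^ n) ^ (-(m/2)-1) *
      (1 - ((α * -p) ^ n / (1 + (α * -p) ^ n)) ^ m) ^ (2:ℕ)))
      (nhdsWithin 0 (Iio 0)) (nhds 0) := by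
    have h := ((hxn1.mul (tendsto_vpow hα hn1 (-(m/2)-1))).mul
      ((tendsto_g hα hn1 hm).pow 2)).const_mul (α * n * (m/2))
    simpa only [zero_mul, one_pow, mul_one, mul_zero] using h
  have hT2 : Tendsto (fun p : ℝ => (2*m*n*α) * ((1 + (α * -p) ^ n) ^ (-(m/2)) *
      (1 - ((α * -p) ^ n / (1 + (α * -p) ^ n)) ^ m)
      * (1 + (α * -p) ^ n) ^ (1-m) / (1 + (α * -p) ^ n) ^ (2:ℕ)) * (α * -p) ^ (n-2))
      (nhdsWithin 0 (Iio 0)) atTop := by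
    have hv2 : Tendsto (fun p : ℝ => ((1 + (α * -p) ^ n)) ^ (2:ℕ))
        (nhdsWithin 0 (Iio 0)) (nhds 1) := by
      simpa using (tendsto_v hα hn1).pow 2
    have hQ : Tendsto (fun p : ℝ => (2*m*n*α) * ((1 + (α * -p) ^ n) ^ (-(m/2)) *
        (1 - ((α * -p) ^ n / (1 + (α * -p) ^ n)) ^ m)
        * (1 + (α * -p) ^ n) ^ (1-m) / (1 + (α * -p) ^ n) ^ (2:ℕ)))
        (nhdsWithin 0 (Iio 0)) (nhds (2*m*n*α)) := by
      have h := ((((tendsto_vpow hα hn1 (-(m/2))).mul (tendsto_g hα hn1 hm)).mul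
        (tendsto_vpow hα hn1 (1-m))).div hv2 one_ne_zero).const_mul (2*m*n*α)
      simpa only [one_mul, mul_one, div_one, Pi.div_apply] using h
    exact Tendsto.pos_mul_atTop (mul_pos (mul_pos (mul_pos two_pos hm') hn0) hα) hQ hxn2
  exact hT1.add_atTop hT2

private lemma hasDerivAt_Fm (α n m : ℝ) (hα : 0 < α) (hn1 : 1 < n) (hm : m = 1 - 1/n)
    {p : ℝ} (hp : p < 0) : HasDerivAt (Fm α n m) (Dm α n m p) p := by
  have hn0 : (0:ℝ) < n := lt_trans one_pos hn1
  have hx : 0 < α * -p := mul_pos hα (neg_pos.mpr hp)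
  have hu0 : 0 < (α * -p) ^ n := Real.rpow_pos_of_pos hx n
  have hv0 : 0 < 1 + (α * -p) ^ n := by linarith
  have hw0 : 0 < (α * -p) ^ n / (1 + (α * -p) ^ n) := div_pos hu0 hv0
  have h1 : HasDerivAt (fun q : ℝ => α * -q) (-α) p := by
    simpa using ((hasDerivAt_id p).neg.const_mul α)
  have hU : HasDerivAt (fun q : ℝ => (α * -q) ^ n) (-α * n * (α * -p) ^ (n-1)) p :=
    h1.rpow_const (Or.inl hx.ne')
  have hV : HasDerivAt (fun q : ℝ => 1 + (α * -q) ^ n) (-α * n * (α * -p) ^ (n-1)) p :=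
    hU.const_add 1
  have hA : HasDerivAt (fun q : ℝ => (1 + (α * -q) ^ n) ^ (-(m/2)))
      ((-α * n * (α * -p) ^ (n-1)) * (-(m/2)) * (1 + (α * -p) ^ n) ^ (-(m/2)-1)) p :=
    hV.rpow_const (Or.inl hv0.ne')
  have hW : HasDerivAt (fun q : ℝ => (α * -q) ^ n / (1 + (α * -q) ^ n))
      (((-α * n * (α * -p) ^ (n-1)) * (1 + (α * -p) ^ n) -
        (α * -p) ^ n * (-α * n * (α * -p) ^ (n-1))) / (1 + (α * -p) ^ n) ^ 2) p :=
    hU.div hV hv0.ne'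
  have hWm := hW.rpow_const (p := m) (Or.inl hw0.ne')
  have hG := hWm.const_sub 1
  have hG2 := hG.pow 2
  have final : HasDerivAt (Fm α n m) _ p := hA.mul hG2
  -- now convert derivative expression
  convert final using 1
  -- algebraic identity
  have hmn : n * (m - 1) = -1 := by rw [hm]; field_simp; ring
  have hukey : ((α * -p) ^ n) ^ (m - 1) = (α * -p)⁻¹ := by
    rw [← Real.rpow_mul hx.le, hmn, Real.rpow_neg_one]
  have hwkey : ((α * -p) ^ n / (1 + (α * -p) ^ n)) ^ (m - 1)
      = (α * -p)⁻¹ / (1 + (α * -p) ^ n) ^ (m-1) := by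
    rw [Real.div_rpow hu0.le hv0.le, hukey]
  have hvkey : ((1 + (α * -p) ^ n) ^ (m-1))⁻¹ = (1 + (α * -p) ^ n) ^ (1-m) := by
    rw [← Real.rpow_neg hv0.le]; ring_nf
  have hxsplit : (α * -p) ^ (n-1) = (α * -p) * (α * -p) ^ (n-2) := by
    rw [show n-1 = 1 + (n-2) by ring, Real.rpow_add hx, Real.rpow_one]
  have hvm0 : (1 + (α * -p) ^ n) ^ (m-1) ≠ 0 := (Real.rpow_pos_of_pos hv0 _).ne'
  have hwkey2 : ((α * -p) ^ n / (1 + (α * -p) ^ n)) ^ (m - 1)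
      = (α * -p)⁻¹ * (1 + (α * -p) ^ n) ^ (1-m) := by
    rw [hwkey, div_eq_mul_inv, hvkey]
  have hsimp : -α * n * (α * -p) ^ (n-1) * (1 + (α * -p) ^ n) -
      (α * -p) ^ n * (-α * n * (α * -p) ^ (n-1)) = -α * n * (α * -p) ^ (n-1) := by ring
  simp only [Dm]
  rw [hsimp, hwkey2, hxsplit]
  set x := α * -p with hxdef
  set V := 1 + x ^ n with hVdef
  set W := (x ^ n / V) ^ m with hWdef
  set V1 := V ^ (-(m/2)-1) with hV1
  set V2 := V ^ (-(m/2)) with hV2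
  set V3 := V ^ (1-m) with hV3
  have hVne : V ≠ 0 := hv0.ne'
  have hxne : x ≠ 0 := hx.ne'
  field_simp
  ring


end limits

/-- For n ∈ (1,2), m = 1-1/n, the Mualem relative conductivity
K_rw(p) = S_w(p)^(1/2)·(1-(1-S_w(p)^(1/m))^m)² (with K_rw(0)=1) is continuous on (-∞,0],
but its derivative blows up as p → 0⁻, hence K_rw is not Lipschitz on (-∞,0]. -/
theorem mualem_conductivity_not_lipschitz
    (α n : ℝ) (hα : 0 < α) (hn1 : 1 < n) (hn2 : n < 2) (m : ℝ) (hm : m = 1 - 1/n)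
    (Sw Krw : ℝ → ℝ)
    (hSw : ∀ p, Sw p = if p < 0 then (1 + (α * (-p)) ^ n) ^ (-m) else 1)
    (hKrw : ∀ p, Krw p = Sw p ^ ((1:ℝ)/2) * (1 - (1 - Sw p ^ (1/m)) ^ m) ^ (2:ℕ)) :
    ContinuousOn Krw (Iic (0:ℝ)) ∧
    Tendsto (deriv Krw) (nhdsWithin 0 (Iio (0:ℝ))) atTop ∧
    ∀ C : NNReal, ¬ LipschitzOnWith C Krw (Iic (0:ℝ)) := by
  have hn0 : (0:ℝ) < n := lt_trans one_pos hn1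
  have hm' : 0 < m := hm0 hn1 hm
  -- Krw agrees with Fm on Iio 0
  have hKF : ∀ p ∈ Iio (0:ℝ), Krw p = Fm α n m p := by
    intro p hp
    have hx : 0 < α * -p := mul_pos hα (neg_pos.2 hp)
    have hu0 : 0 < (α * -p) ^ n := Real.rpow_pos_of_pos hx n
    have hv0 : 0 < 1 + (α * -p) ^ n := by linarith
    rw [hKrw, hSw, if_pos (show p < 0 from hp)]
    simp only [Fm]
    have e1 : ((1 + (α * -p) ^ n) ^ (-m)) ^ ((1:ℝ)/2) = (1 + (α * -p) ^ n) ^ (-(m/2)) := by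
      rw [← Real.rpow_mul hv0.le]
      congr 1
      ring
    have e2 : (1 : ℝ) - ((1 + (α * -p) ^ n) ^ (-m)) ^ ((1:ℝ)/m)
        = (α * -p) ^ n / (1 + (α * -p) ^ n) := by
      rw [← Real.rpow_mul hv0.le]
      have : -m * (1/m) = -1 := by field_simp
      rw [this, Real.rpow_neg_one, eq_div_iff hv0.ne', sub_mul, one_mul,
        inv_mul_cancel₀ hv0.ne']
      ring
    rw [e1, e2]
  -- derivative of Krw on Iio 0
  have hKD : ∀ p ∈ Iio (0:ℝ), HasDerivAt Krw (Dm α n m p) p := by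
    intro p hp
    have hF := hasDerivAt_Fm α n m hα hn1 hm hp
    apply hF.congr_of_eventuallyEq
    filter_upwards [isOpen_Iio.mem_nhds hp] with q hq
    exact hKF q hq
  -- Krw 0 = 1
  have hK0 : Krw 0 = 1 := by
    rw [hKrw, hSw]
    simp [Real.one_rpow, Real.zero_rpow hm'.ne']
  -- limit of Krw from the left is 1
  have hKlim : Tendsto Krw (nhdsWithin 0 (Iio 0)) (nhds 1) := by
    apply (tendsto_Fm hα hn1 hm).congr'
    filter_upwards [eventually_mem_nhdsWithin] with p hp
    exact (hKF p hp).symm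
  -- derivative tendsto
  have hDtend : Tendsto (deriv Krw) (nhdsWithin 0 (Iio (0:ℝ))) atTop := by
    apply (tendsto_Dm hα hn1 hn2 hm).congr'
    filter_upwards [eventually_mem_nhdsWithin] with p hp
    exact ((hKD p hp).deriv).symm
  refine ⟨?_, hDtend, ?_⟩
  · -- continuity
    intro p hp
    rcases lt_or_eq_of_le (mem_Iic.1 hp) with hp' | hp'
    · exact ((hKD p hp').continuousAt).continuousWithinAt
    · subst hp'
      unfold ContinuousWithinAt
      rw [hK0, show Iic (0:ℝ) = Iio 0 ∪ {0} by
        ext x; simp [le_iff_lt_or_eq], nhdsWithin_union, tendsto_sup]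
      refine ⟨hKlim, ?_⟩
      rw [nhdsWithin_singleton, tendsto_pure_left]
      intro s hs
      rw [hK0]
      exact mem_of_mem_nhds hs
  · -- not Lipschitz
    intro C hC
    have hev := hDtend.eventually_gt_atTop (C : ℝ)
    obtain ⟨p, hp1, hp2⟩ := (hev.and eventually_mem_nhdsWithin).exists
    have hD := hKD p hp2
    have hDa : HasDerivAt Krw (deriv Krw p) p := hD.deriv ▸ hD
    have hslope := hasDerivAt_iff_tendsto_slope.1 hDa
    have habs : Tendsto (fun q => |slope Krw p q|) (nhdsWithin p {p}ᶜ) (nhds |deriv Krw p|) :=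
      hslope.abs
    have hle : |deriv Krw p| ≤ (C : ℝ) := by
      apply le_of_tendsto habs
      have hmem : Iic (0:ℝ) ∈ nhdsWithin p {p}ᶜ :=
        mem_nhdsWithin_of_mem_nhds (Iic_mem_nhds hp2)
      filter_upwards [hmem, eventually_mem_nhdsWithin] with q hq hq'
      have hqp : q ≠ p := hq'
      have hd := hC.dist_le_mul (x := q) (y := p) hq (mem_Iic.2 (le_of_lt hp2))
      rw [Real.dist_eq, Real.dist_eq] at hd
      rw [slope_def_field, abs_div]
      rw [div_le_iff₀ (abs_pos.2 (sub_ne_zero.2 hqp))]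
      calc |Krw q - Krw p| ≤ (C:ℝ) * |q - p| := hd
        _ = (C:ℝ) * |q - p| := rfl
    have : (C : ℝ) < deriv Krw p := hp1
    have : deriv Krw p ≤ |deriv Krw p| := le_abs_self _
    linarith
end

section
/- Optimal MLMC sample allocation: the minimizer of the total cost Σ_{ℓ=0}^L N_ℓ W_ℓ over positive reals N_0,…,N_L subject to the constraint Σ_{ℓ=0}^L V_ℓ/N_ℓ = ε² is given by N_ℓ = ε^{-2} (Σ_{k=0}^L √(V_k W_k)) √(V_ℓ/W_ℓ), and the resulting minimal cost is ε^{-2}(Σ_{ℓ=0}^L √(V_ℓ W_ℓ))². -/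
open Finset Real

/-- Optimal MLMC sample allocation: N_ℓ = ε⁻²(Σ_k √(V_k W_k))√(V_ℓ/W_ℓ) satisfies the
constraint Σ V_ℓ/N_ℓ = ε², attains cost ε⁻²(Σ √(V_ℓ W_ℓ))², and minimizes the total
cost Σ N_ℓ W_ℓ among all positive allocations satisfying the constraint. -/
theorem mlmc_optimal_allocation
    (L : ℕ) (V W : Fin (L + 1) → ℝ) (hV : ∀ ℓ, 0 < V ℓ) (hW : ∀ ℓ, 0 < W ℓ)
    (ε : ℝ) (hε : 0 < ε)
    (Nopt : Fin (L + 1) → ℝ)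
    (hNopt : ∀ ℓ, Nopt ℓ =
      ε⁻¹ ^ 2 * (∑ k, Real.sqrt (V k * W k)) * Real.sqrt (V ℓ / W ℓ)) :
    (∑ ℓ, V ℓ / Nopt ℓ = ε ^ 2) ∧
    (∑ ℓ, Nopt ℓ * W ℓ = ε⁻¹ ^ 2 * (∑ ℓ, Real.sqrt (V ℓ * W ℓ)) ^ 2) ∧
    (∀ N : Fin (L + 1) → ℝ, (∀ ℓ, 0 < N ℓ) → (∑ ℓ, V ℓ / N ℓ = ε ^ 2) →
      ∑ ℓ, Nopt ℓ * W ℓ ≤ ∑ ℓ, N ℓ * W ℓ) := by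
  set S := ∑ k, Real.sqrt (V k * W k) with hS
  have hSpos : 0 < S :=
    Finset.sum_pos (fun k _ => Real.sqrt_pos.2 (mul_pos (hV k) (hW k)))
      ⟨⟨0, Nat.succ_pos L⟩, Finset.mem_univ _⟩
  have key1 : ∀ ℓ, Real.sqrt (V ℓ / W ℓ) * W ℓ = Real.sqrt (V ℓ * W ℓ) := by
    intro ℓ
    rw [Real.sqrt_div (hV ℓ).le, Real.sqrt_mul (hV ℓ).le, div_mul_eq_mul_div,
      mul_div_assoc, Real.div_sqrt]
  have key2 : ∀ ℓ, V ℓ / Real.sqrt (V ℓ / W ℓ) = Real.sqrt (V ℓ * W ℓ) := by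
    intro ℓ
    rw [Real.sqrt_div (hV ℓ).le, Real.sqrt_mul (hV ℓ).le, div_div_eq_mul_div,
      mul_comm (V ℓ), mul_div_assoc, Real.div_sqrt, mul_comm]
  have hterm : ∀ ℓ, V ℓ / Nopt ℓ = ε ^ 2 / S * Real.sqrt (V ℓ * W ℓ) := by
    intro ℓ
    have hx : Real.sqrt (V ℓ / W ℓ) ≠ 0 :=
      (Real.sqrt_pos.2 (div_pos (hV ℓ) (hW ℓ))).ne'
    rw [hNopt, ← key2 ℓ]
    field_simp
  have hcost : ∀ ℓ, Nopt ℓ * W ℓ = ε⁻¹ ^ 2 * S * Real.sqrt (V ℓ * W ℓ) := by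
    intro ℓ
    rw [hNopt, mul_assoc, key1]
  have hcostsum : ∑ ℓ, Nopt ℓ * W ℓ = ε⁻¹ ^ 2 * S ^ 2 := by
    rw [Finset.sum_congr rfl (fun ℓ _ => hcost ℓ), ← Finset.mul_sum, ← hS]
    ring
  refine ⟨?_, by rw [hcostsum], ?_⟩
  · rw [Finset.sum_congr rfl (fun ℓ _ => hterm ℓ), ← Finset.mul_sum, ← hS]
    field_simp
  · intro N hN hconstr
    have hCS : S ^ 2 ≤ (∑ ℓ, V ℓ / N ℓ) * ∑ ℓ, N ℓ * W ℓ := by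
      have hrw : ∀ ℓ : Fin (L + 1),
          Real.sqrt (V ℓ * W ℓ) = Real.sqrt (V ℓ / N ℓ) * Real.sqrt (N ℓ * W ℓ) := by
        intro ℓ
        rw [← Real.sqrt_mul (div_pos (hV ℓ) (hN ℓ)).le]
        congr 1
        rw [div_mul_eq_mul_div, eq_div_iff (hN ℓ).ne']
        ring
      calc S ^ 2 = (∑ ℓ, Real.sqrt (V ℓ / N ℓ) * Real.sqrt (N ℓ * W ℓ)) ^ 2 := by
            rw [hS]; congr 1; exact Finset.sum_congr rfl fun ℓ _ => hrw ℓ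
        _ ≤ (∑ ℓ, Real.sqrt (V ℓ / N ℓ) ^ 2) * ∑ ℓ, Real.sqrt (N ℓ * W ℓ) ^ 2 :=
            Finset.sum_mul_sq_le_sq_mul_sq _ _ _
        _ = (∑ ℓ, V ℓ / N ℓ) * ∑ ℓ, N ℓ * W ℓ := by
            congr 1 <;> refine Finset.sum_congr rfl fun ℓ _ => ?_
            · exact Real.sq_sqrt (div_pos (hV ℓ) (hN ℓ)).le
            · exact Real.sq_sqrt (mul_pos (hN ℓ) (hW ℓ)).le
    rw [hcostsum, inv_pow, inv_mul_le_iff₀ (by positivity)]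
    rw [hconstr] at hCS
    linarith
end
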